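/- arXiv:1911.00265 — 5 statements merged into one kernel-verified Lean document; each statement's English description precedes it below -/
import Mathlib

section
/- Let d be a positive integer, let f : ℝ^d → ℝ^d be a C¹ diffeomorphism with inverse g, and let u₀, u₁, …, u_m be finitely many auxiliary values. For each uᵢ let p*(·|uᵢ) be a conditionally independent exponential-family density on ℝ^d, i.e. log p*(s|uᵢ) = Σ_{j=1}^d λ_j(uᵢ) q_j(s_j) + λ₀(uᵢ) − log Z(λ(uᵢ)) with p*(s|uᵢ) > 0 everywhere, let δ(·|uᵢ) be a nonnegative outlier density, let ε(uᵢ) ∈ [0,1), and let the contaminated density be p(s|uᵢ) = (1−ε(uᵢ))p*(s|uᵢ) + ε(uᵢ)δ(s|uᵢ); define p(x|uᵢ) := p(g(x)|uᵢ)·|det Dg(x)|. Assume: (i) there is a constant M such that δ(s|uᵢ)/p*(s|uᵢ) ≤ M for all s ∈ ℝ^d and all i, and ε_max·(M+1) ≤ 1/2, where ε_max := max_{0≤i≤m} ε(uᵢ); (ii) there exist vectors w(uᵢ) ∈ ℝ^d, a function h : ℝ^d → ℝ^d, and positive scalar functions c(x), e(uᵢ) such that log( p(x|uᵢ) / (c(x)·e(uᵢ))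 ) = w(uᵢ)ᵀ h(x) for all x and all i; (iii) with λ̄(uᵢ) := (λ₁(uᵢ),…,λ_d(uᵢ)) − (λ₁(u₀),…,λ_d(u₀)) and w̄(uᵢ) := w(uᵢ) − w(u₀), the d×d matrices Λ̄ := Σ_{i=1}^m λ̄(uᵢ)λ̄(uᵢ)ᵀ and W̄ := Σ_{i=1}^m w̄(uᵢ)λ̄(uᵢ)ᵀ are invertible. Then, setting ω̄(uᵢ) := Λ̄⁻¹λ̄(uᵢ) and q(s) := (q₁(s₁),…,q_d(s_d)), there exist an invertible d×d matrix A, a vector α ∈ ℝ^d, a constant C (depending only on M, m, and the vectors ω̄(uᵢ)) and a function ρ : ℝ^d → ℝ^d with ‖ρ(s)‖ ≤ C·ε_max² for all s, such that for every s ∈ ℝ^d: q(s) + Σ_{i=1}^m [ ε(uᵢ)·δ(s|uᵢ)/p*(s|uᵢ) − ε(u₀)·δ(s|u₀)/p*(s|u₀) ]·ω̄(uᵢ) + ρ(s) = A·h(f(s)) + α. -/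
open Matrix

/-! The contaminated density factors as `p = p* · (1 + t)` with `t = ε (δ / p* - 1)`, and the
assumption `ε_max (M + 1) ≤ 1/2` keeps `|t| ≤ 1/2`, where `log (1 + t) = t + O(t²)`.
Taking logarithms in the universal approximation assumption, the unknown terms `log c(x)` and
`log |det Dg(x)|` do not depend on `i`, so they cancel in the differences with `u₀`; this leaves
`λ̄ᵢ ⬝ q(s) = w̄ᵢ ⬝ h(f s) + const - (εᵢ δᵢ/p*ᵢ - ε₀ δ₀/p*₀)(s) + O(ε_max²)`. Since
`Λ̄ = ∑ᵢ λ̄ᵢ λ̄ᵢᵀ` is invertible, every vector `v` is recovered from the numbers `λ̄ᵢ ⬝ v` as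
`∑ᵢ (λ̄ᵢ ⬝ v) ω̄ᵢ`, which gives the claim with `A = Λ̄⁻¹ ∑ᵢ λ̄ᵢ w̄ᵢᵀ`, invertible because
`∑ᵢ λ̄ᵢ w̄ᵢᵀ = W̄ᵀ`. -/

noncomputable def logOneAddRemainder (t : ℝ) : ℝ := Real.log (1 + t) - t

lemma abs_logOneAddRemainder_le {t : ℝ} (ht : |t| ≤ 1 / 2) :
    |logOneAddRemainder t| ≤ 2 * t ^ 2 := by
  have hlt : |-t| < 1 := by rw [abs_neg]; linarith
  have hseries := Real.abs_log_sub_add_sum_range_le hlt 1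
  simp only [Finset.sum_range_one, pow_one, Nat.cast_zero, zero_add, div_one, abs_neg,
    sub_neg_eq_add, neg_add_eq_sub] at hseries
  refine hseries.trans ?_
  rw [div_le_iff₀ (by linarith), show |t| ^ (1 + 1) = t ^ 2 by norm_num [sq_abs]]
  nlinarith [mul_nonneg (sq_nonneg t) (by linarith : (0:ℝ) ≤ 1 - 2 * |t|)]

lemma log_mul_div_mul {a b c e : ℝ} (ha : 0 < a) (hb : 0 < b) (hc : 0 < c) (he : 0 < e) :
    Real.log (a * b / (c * e)) = Real.log a + Real.log b - Real.log c - Real.log e := by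
  rw [Real.log_div (by positivity) (by positivity), Real.log_mul ha.ne' hb.ne',
    Real.log_mul hc.ne' he.ne']
  ring

lemma det_fderiv_ne_zero_of_leftInverse {𝕜 E : Type*} [NontriviallyNormedField 𝕜]
    [NormedAddCommGroup E] [NormedSpace 𝕜 E] {f g : E → E} {x : E}
    (hgf : Function.LeftInverse g f) (hg : DifferentiableAt 𝕜 g (f x))
    (hf : DifferentiableAt 𝕜 f x) : (fderiv 𝕜 g (f x)).det ≠ 0 := by
  have hcomp : (fderiv 𝕜 g (f x)).comp (fderiv 𝕜 f x) = ContinuousLinearMap.id 𝕜 E := by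
    rw [← fderiv_comp x hg hf, hgf.comp_eq_id, fderiv_id]
  have hdet := congrArg (fun L : E →L[𝕜] E => LinearMap.det (L : E →ₗ[𝕜] E)) hcomp
  simp only [ContinuousLinearMap.toLinearMap_comp, LinearMap.det_comp,
    ContinuousLinearMap.coe_id, LinearMap.det_id] at hdet
  exact left_ne_zero_of_mul_eq_one hdet

lemma norm_sum_smul_le_of_norm_le {ι 𝕜 E : Type*} [Fintype ι] [NormedField 𝕜]
    [SeminormedAddCommGroup E] [NormedSpace 𝕜 E] {x : ι → 𝕜} {v : ι → E} {B : ℝ}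
    (hx : ∀ i, ‖x i‖ ≤ B) : ‖∑ i, x i • v i‖ ≤ B * ∑ i, ‖v i‖ := by
  rw [Finset.mul_sum]
  refine (norm_sum_le _ _).trans (Finset.sum_le_sum fun i _ => ?_)
  rw [norm_smul]
  exact mul_le_mul_of_nonneg_right (hx i) (norm_nonneg _)

section SumVecMulVec

variable {ι n K : Type*} [Fintype ι] [Fintype n]

lemma sum_vecMulVec_mulVec [CommSemiring K] (a b : ι → n → K) (v : n → K) :
    (∑ i, vecMulVec (a i) (b i)) *ᵥ v = ∑ i, (b i ⬝ᵥ v) • a i := by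
  simp [sum_mulVec, vecMulVec_mulVec]

lemma det_sum_vecMulVec_comm [CommRing K] [DecidableEq n] (a b : ι → n → K) :
    (∑ i, vecMulVec (a i) (b i)).det = (∑ i, vecMulVec (b i) (a i)).det := by
  rw [← det_transpose, transpose_sum]
  simp only [transpose_vecMulVec]

variable [Field K] [DecidableEq n] (a b : ι → n → K) {Λ : Matrix n n K}

lemma isUnit_det_inv_mul_sum_vecMulVec (hΛ : IsUnit Λ.det)
    (hba : IsUnit (∑ i, vecMulVec (b i) (a i)).det) :
    IsUnit (Λ⁻¹ * ∑ i, vecMulVec (a i) (b i)).det := by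
  rw [det_mul, det_sum_vecMulVec_comm]
  exact (isUnit_nonsing_inv_det Λ hΛ).mul hba

lemma eq_mulVec_add_sum_smul_of_dotProduct_eq (hΛ : Λ = ∑ i, vecMulVec (a i) (a i))
    (hΛdet : IsUnit Λ.det) {y z : n → K} {c : ι → K}
    (hyz : ∀ i, a i ⬝ᵥ y = b i ⬝ᵥ z + c i) :
    y = (Λ⁻¹ * ∑ i, vecMulVec (a i) (b i)) *ᵥ z + ∑ i, c i • Λ⁻¹ *ᵥ a i := by
  calc y = Λ⁻¹ *ᵥ (Λ *ᵥ y) := by rw [mulVec_mulVec, nonsing_inv_mul _ hΛdet, one_mulVec]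
    _ = Λ⁻¹ *ᵥ ∑ i, (b i ⬝ᵥ z + c i) • a i := by
      rw [hΛ, sum_vecMulVec_mulVec]
      simp_rw [hyz]
    _ = _ := by
      simp only [← mulVec_mulVec, sum_vecMulVec_mulVec, add_smul, Finset.sum_add_distrib,
        mulVec_add, mulVec_sum, mulVec_smul]

end SumVecMulVec

section Contamination

variable {ε εmax p δ M : ℝ}

lemma one_add_contamination_pos (hp : 0 < p) (hδ : 0 ≤ δ) (hε : ε ∈ Set.Ico 0 1) :
    0 < 1 + (ε * (δ / p) - ε) := by
  nlinarith [mul_nonneg hε.1 (div_nonneg hδ hp.le), hε.2]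

lemma contaminated_eq_mul (hp : 0 < p) :
    (1 - ε) * p + ε * δ = p * (1 + (ε * (δ / p) - ε)) := by
  field_simp
  ring

lemma log_contaminated_eq (hp : 0 < p) (hδ : 0 ≤ δ) (hε : ε ∈ Set.Ico 0 1) :
    Real.log ((1 - ε) * p + ε * δ) = Real.log p + Real.log (1 + (ε * (δ / p) - ε)) := by
  rw [contaminated_eq_mul hp, Real.log_mul hp.ne' (one_add_contamination_pos hp hδ hε).ne']

lemma contaminated_pos (hp : 0 < p) (hδ : 0 ≤ δ) (hε : ε ∈ Set.Ico 0 1) :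
    0 < (1 - ε) * p + ε * δ := by
  rw [contaminated_eq_mul hp]
  exact mul_pos hp (one_add_contamination_pos hp hδ hε)

lemma abs_logOneAddRemainder_contamination_le {r : ℝ} (hε : 0 ≤ ε) (hεmax : ε ≤ εmax)
    (hr : 0 ≤ r) (hrM : r ≤ M) (hsmall : εmax * (M + 1) ≤ 1 / 2) :
    |logOneAddRemainder (ε * r - ε)| ≤ 2 * (M + 1) ^ 2 * εmax ^ 2 := by
  have ht : |ε * r - ε| ≤ εmax * (M + 1) := by
    rw [show ε * r - ε = ε * (r - 1) by ring, abs_mul, abs_of_nonneg hε]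
    exact mul_le_mul hεmax (abs_le.2 ⟨by linarith, by linarith⟩) (abs_nonneg _) (hε.trans hεmax)
  calc |logOneAddRemainder (ε * r - ε)| ≤ 2 * (ε * r - ε) ^ 2 :=
        abs_logOneAddRemainder_le (ht.trans hsmall)
    _ = 2 * |ε * r - ε| ^ 2 := by rw [sq_abs]
    _ ≤ 2 * (εmax * (M + 1)) ^ 2 := by gcongr
    _ = 2 * (M + 1) ^ 2 * εmax ^ 2 := by ring

end Contamination

theorem identifiability_with_outliers_general (d m : ℕ)
    (f g : (Fin d → ℝ) → (Fin d → ℝ))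
    (hf : ContDiff ℝ 1 f) (hg : ContDiff ℝ 1 g)
    (hgf : Function.LeftInverse g f)
    (lam : Fin (m + 1) → Fin d → ℝ) (lam0 : Fin (m + 1) → ℝ) (logZ : Fin (m + 1) → ℝ)
    (q : Fin d → ℝ → ℝ)
    (pstar : Fin (m + 1) → (Fin d → ℝ) → ℝ)
    (hpos : ∀ i s, 0 < pstar i s)
    (hexp : ∀ i s, Real.log (pstar i s)
      = (∑ j, lam i j * q j (s j)) + lam0 i - logZ i)
    -- contamination by outliers
    (δ : Fin (m + 1) → (Fin d → ℝ) → ℝ) (hδ : ∀ i s, 0 ≤ δ i s)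
    (ε : Fin (m + 1) → ℝ) (hε : ∀ i, ε i ∈ Set.Ico (0 : ℝ) 1)
    (p : Fin (m + 1) → (Fin d → ℝ) → ℝ)
    (hp : ∀ i s, p i s = (1 - ε i) * pstar i s + ε i * δ i s)
    -- density of x given uᵢ, by the change of variables x = f(s), g = f⁻¹
    (pX : Fin (m + 1) → (Fin d → ℝ) → ℝ)
    (hpX : ∀ i x, pX i x = p i (g x) * |(fderiv ℝ g x).det|)
    -- (A3): uniformly bounded density ratio, and ε_max(M+1) ≤ 1/2
    (M : ℝ) (hM : ∀ i s, δ i s / pstar i s ≤ M)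
    (εmax : ℝ) (hεmax : εmax = Finset.univ.sup' Finset.univ_nonempty ε)
    (hsmall : εmax * (M + 1) ≤ 1 / 2)
    -- (A4): universal approximation assumption
    (w : Fin (m + 1) → Fin d → ℝ) (h : (Fin d → ℝ) → (Fin d → ℝ))
    (c : (Fin d → ℝ) → ℝ) (e : Fin (m + 1) → ℝ)
    (hc : ∀ x, 0 < c x) (he : ∀ i, 0 < e i)
    (huniv : ∀ i x, Real.log (pX i x / (c x * e i)) = ∑ j, w i j * h x j)
    -- (A5): invertibility of the two d × d matrices
    (barlam barw : Fin (m + 1) → Fin d → ℝ)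
    (hbarlam : ∀ i, barlam i = lam i - lam 0)
    (hbarw : ∀ i, barw i = w i - w 0)
    (Λbar : Matrix (Fin d) (Fin d) ℝ)
    (hΛbar : Λbar = ∑ i : Fin m, Matrix.vecMulVec (barlam i.succ) (barlam i.succ))
    (hΛ : IsUnit Λbar.det)
    (hW : IsUnit (∑ i : Fin m, Matrix.vecMulVec (barw i.succ) (barlam i.succ)).det)
    (ωbar : Fin (m + 1) → Fin d → ℝ)
    (hωbar : ∀ i, ωbar i = Λbar⁻¹.mulVec (barlam i)) :
    ∃ A : Matrix (Fin d) (Fin d) ℝ, IsUnit A.det ∧ ∃ α : Fin d → ℝ, ∃ C : ℝ,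
      ∃ ρ : (Fin d → ℝ) → (Fin d → ℝ),
        (∀ s, ‖ρ s‖ ≤ C * εmax ^ 2) ∧
        ∀ s : Fin d → ℝ,
          (fun j => q j (s j))
            + (∑ i : Fin m,
                (ε i.succ * (δ i.succ s / pstar i.succ s)
                  - ε 0 * (δ 0 s / pstar 0 s)) • ωbar i.succ)
            + ρ s
          = A.mulVec (h (f s)) + α := by
  have hlogp : ∀ k s, Real.log (p k s) = lam k ⬝ᵥ (fun j => q j (s j)) + lam0 k - logZ k
      + Real.log (1 + (ε k * (δ k s / pstar k s) - ε k)) := fun k s => by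
    rw [hp, log_contaminated_eq (hpos k s) (hδ k s) (hε k), hexp]
    rfl
  have hchange : ∀ k s, Real.log (p k s) + Real.log |(fderiv ℝ g (f s)).det|
      - Real.log (c (f s)) - Real.log (e k) = w k ⬝ᵥ h (f s) := fun k s => by
    have hJ := det_fderiv_ne_zero_of_leftInverse hgf (hg.differentiable one_ne_zero (f s))
      (hf.differentiable one_ne_zero s)
    have hppos : 0 < p k s := hp k s ▸ contaminated_pos (hpos k s) (hδ k s) (hε k)
    have hx := huniv k (f s)
    rw [hpX, hgf s, log_mul_div_mul hppos (abs_pos.2 hJ) (hc _) (he k)] at hx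
    exact hx
  set R : Fin (m + 1) → (Fin d → ℝ) → ℝ :=
    fun k s => logOneAddRemainder (ε k * (δ k s / pstar k s) - ε k) with hR
  set κ : Fin m → ℝ := fun i => Real.log (e i.succ) - Real.log (e 0) - (lam0 i.succ - lam0 0)
    + (logZ i.succ - logZ 0) + (ε i.succ - ε 0) with hκ
  have hdiff : ∀ (i : Fin m) s, barlam i.succ ⬝ᵥ (fun j => q j (s j)) = barw i.succ ⬝ᵥ h (f s)
      + (κ i - (ε i.succ * (δ i.succ s / pstar i.succ s) - ε 0 * (δ 0 s / pstar 0 s))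
        - (R i.succ s - R 0 s)) := fun i s => by
    simp only [hbarlam, hbarw, sub_dotProduct, hR, hκ, logOneAddRemainder]
    linarith [hlogp i.succ s, hlogp 0 s, hchange i.succ s, hchange 0 s]
  have hRle : ∀ k s, |R k s| ≤ 2 * (M + 1) ^ 2 * εmax ^ 2 := fun k s =>
    abs_logOneAddRemainder_contamination_le (hε k).1
      (hεmax ▸ Finset.le_sup' ε (Finset.mem_univ k)) (div_nonneg (hδ k s) (hpos k s).le)
      (hM k s) hsmall
  refine ⟨_, isUnit_det_inv_mul_sum_vecMulVec (fun i : Fin m => barlam i.succ)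
      (fun i => barw i.succ) hΛ hW,
    ∑ i : Fin m, κ i • ωbar i.succ, 4 * (M + 1) ^ 2 * ∑ i : Fin m, ‖ωbar i.succ‖,
    fun s => ∑ i : Fin m, (R i.succ s - R 0 s) • ωbar i.succ, fun s => ?_, fun s => ?_⟩
  · refine (norm_sum_smul_le_of_norm_le (B := 4 * (M + 1) ^ 2 * εmax ^ 2) fun i => ?_).trans_eq
      (by ring)
    rw [Real.norm_eq_abs]
    exact (abs_sub _ _).trans (by linarith [hRle i.succ s, hRle 0 s])
  · rw [eq_mulVec_add_sum_smul_of_dotProduct_eq _ _ hΛbar hΛ (hdiff · s)]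
    simp only [← hωbar, sub_smul, Finset.sum_sub_distrib]
    abel

/-- Theorem 1, contaminated exponential-family case: for data `x = f(s)` with
contaminated source densities `p(s|uᵢ) = (1−ε(uᵢ))p*(s|uᵢ) + ε(uᵢ)δ(s|uᵢ)`, a conditionally
independent exponential-family target `p*`, a bounded density ratio `δ/p* ≤ M` with
`ε_max(M+1) ≤ 1/2`, the universal approximation assumption on `p(x|uᵢ)`, and invertible
matrices `Λ̄` and `Σᵢ w̄(uᵢ)λ̄(uᵢ)ᵀ`, there are an invertible matrix `A`, a vector `α`, a
constant `C` and a remainder `ρ` with `‖ρ(s)‖ ≤ C·ε_max²` such that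
`q(s) + Σᵢ [ε(uᵢ)δ(s|uᵢ)/p*(s|uᵢ) − ε(u₀)δ(s|u₀)/p*(s|u₀)]·ω̄(uᵢ) + ρ(s) = A h(f(s)) + α`. -/
theorem identifiability_with_outliers (d m : ℕ) (hd : 0 < d)
    (f g : (Fin d → ℝ) → (Fin d → ℝ))
    (hf : ContDiff ℝ 1 f) (hg : ContDiff ℝ 1 g)
    (hgf : Function.LeftInverse g f) (hfg : Function.RightInverse g f)
    (lam : Fin (m + 1) → Fin d → ℝ) (lam0 : Fin (m + 1) → ℝ) (logZ : Fin (m + 1) → ℝ)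
    (q : Fin d → ℝ → ℝ)
    (pstar : Fin (m + 1) → (Fin d → ℝ) → ℝ)
    (hpos : ∀ i s, 0 < pstar i s)
    (hexp : ∀ i s, Real.log (pstar i s)
      = (∑ j, lam i j * q j (s j)) + lam0 i - logZ i)
    -- contamination by outliers
    (δ : Fin (m + 1) → (Fin d → ℝ) → ℝ) (hδ : ∀ i s, 0 ≤ δ i s)
    (ε : Fin (m + 1) → ℝ) (hε : ∀ i, ε i ∈ Set.Ico (0 : ℝ) 1)
    (p : Fin (m + 1) → (Fin d → ℝ) → ℝ)
    (hp : ∀ i s, p i s = (1 - ε i) * pstar i s + ε i * δ i s)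
    -- density of x given uᵢ, by the change of variables x = f(s), g = f⁻¹
    (pX : Fin (m + 1) → (Fin d → ℝ) → ℝ)
    (hpX : ∀ i x, pX i x = p i (g x) * |(fderiv ℝ g x).det|)
    -- (A3): uniformly bounded density ratio, and ε_max(M+1) ≤ 1/2
    (M : ℝ) (hM : ∀ i s, δ i s / pstar i s ≤ M)
    (εmax : ℝ) (hεmax : εmax = Finset.univ.sup' Finset.univ_nonempty ε)
    (hsmall : εmax * (M + 1) ≤ 1 / 2)
    -- (A4): universal approximation assumption
    (w : Fin (m + 1) → Fin d → ℝ) (h : (Fin d → ℝ) → (Fin d → ℝ))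
    (c : (Fin d → ℝ) → ℝ) (e : Fin (m + 1) → ℝ)
    (hc : ∀ x, 0 < c x) (he : ∀ i, 0 < e i)
    (huniv : ∀ i x, Real.log (pX i x / (c x * e i)) = ∑ j, w i j * h x j)
    -- (A5): invertibility of the two d × d matrices
    (barlam barw : Fin (m + 1) → Fin d → ℝ)
    (hbarlam : ∀ i, barlam i = lam i - lam 0)
    (hbarw : ∀ i, barw i = w i - w 0)
    (Λbar : Matrix (Fin d) (Fin d) ℝ)
    (hΛbar : Λbar = ∑ i : Fin m, Matrix.vecMulVec (barlam i.succ) (barlam i.succ))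
    (hΛ : IsUnit Λbar.det)
    (hW : IsUnit (∑ i : Fin m, Matrix.vecMulVec (barw i.succ) (barlam i.succ)).det)
    (ωbar : Fin (m + 1) → Fin d → ℝ)
    (hωbar : ∀ i, ωbar i = Λbar⁻¹.mulVec (barlam i)) :
    ∃ A : Matrix (Fin d) (Fin d) ℝ, IsUnit A.det ∧ ∃ α : Fin d → ℝ, ∃ C : ℝ,
      ∃ ρ : (Fin d → ℝ) → (Fin d → ℝ),
        (∀ s, ‖ρ s‖ ≤ C * εmax ^ 2) ∧
        ∀ s : Fin d → ℝ,
          (fun j => q j (s j))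
            + (∑ i : Fin m,
                (ε i.succ * (δ i.succ s / pstar i.succ s)
                  - ε 0 * (δ 0 s / pstar 0 s)) • ωbar i.succ)
            + ρ s
          = A.mulVec (h (f s)) + α :=
  identifiability_with_outliers_general d m f g hf hg hgf lam lam0 logZ q pstar hpos hexp δ hδ ε hε
    p hp pX hpX M hM εmax hεmax hsmall w h c e hc he huniv barlam barw hbarlam hbarw Λbar hΛbar hΛ
    hW ωbar hωbar
end

section
/- Let d be a positive integer, let f : ℝ^d → ℝ^d be a C¹ diffeomorphism with inverse g, and let u₀, u₁, …, u_m be finitely many auxiliary values. For each uᵢ let p*(·|uᵢ) be a conditionally independent exponential-family density on ℝ^d, i.e. log p*(s|uᵢ) = Σ_{j=1}^d λ_j(uᵢ) q_j(s_j) + λ₀(uᵢ) − log Z(λ(uᵢ)) with p*(s|uᵢ) > 0 everywhere, and define p*(x|uᵢ) := p*(g(x)|uᵢ)·|det Dg(x)|. Assume there exist vectors w(uᵢ) ∈ ℝ^d, a function h : ℝ^d → ℝ^d, and positive scalar functions c(x), e(uᵢ) such that log( p*(x|uᵢ)/(c(x)·e(uᵢ)) ) = w(uᵢ)ᵀ h(x)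 for all x and all i, and that, with λ̄(uᵢ) := (λ₁(uᵢ),…,λ_d(uᵢ)) − (λ₁(u₀),…,λ_d(u₀)) and w̄(uᵢ) := w(uᵢ) − w(u₀), the matrices Λ̄ := Σ_{i=1}^m λ̄(uᵢ)λ̄(uᵢ)ᵀ and Σ_{i=1}^m w̄(uᵢ)λ̄(uᵢ)ᵀ are invertible. Then there exist an invertible d×d matrix A and a vector α ∈ ℝ^d such that q(s) = A·h(f(s)) + α for all s ∈ ℝ^d, where q(s) := (q₁(s₁),…,q_d(s_d)). -/
/-!
Taking logarithms, the change of variables turns the approximation assumption into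
`λ(uᵢ)ᵀ q(s) + κᵢ + γ(s) = w(uᵢ)ᵀ h(f s)`, where `κᵢ` depends only on `i` and
`γ(s) = log |det Dg(f s)| - log c(f s)` only on `s`; this `γ` is a genuine logarithm because
`f ∘ g = id` forces `det Dg ≠ 0`. Subtracting the equation for `u₀` removes `γ` and leaves the
linear system `L q(s) = W h(f s) + b` whose rows are `λ̄(uᵢ)` and `w̄(uᵢ)`. As `LᵀL = Λ̄` is
invertible, `q(s) = (LᵀL)⁻¹ LᵀW h(f s) + (LᵀL)⁻¹ Lᵀ b`, and `LᵀW` is invertible because its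
transpose is `Σᵢ w̄(uᵢ) λ̄(uᵢ)ᵀ`.
-/

open Matrix

theorem det_fderiv_ne_zero_of_rightInverse {𝕜 E : Type*} [NontriviallyNormedField 𝕜]
    [NormedAddCommGroup E] [NormedSpace 𝕜 E] {f g : E → E} {x : E}
    (hf : DifferentiableAt 𝕜 f (g x)) (hg : DifferentiableAt 𝕜 g x)
    (hfg : Function.RightInverse g f) : (fderiv 𝕜 g x).det ≠ 0 := by
  have hcomp : (fderiv 𝕜 f (g x)).comp (fderiv 𝕜 g x) = ContinuousLinearMap.id 𝕜 E := by
    rw [← fderiv_comp x hf hg, hfg.comp_eq_id, fderiv_id]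
  have hmul : (fderiv 𝕜 f (g x)).det * (fderiv 𝕜 g x).det = 1 := by
    simpa [ContinuousLinearMap.det, ContinuousLinearMap.coe_comp] using
      congrArg ContinuousLinearMap.det hcomp
  exact right_ne_zero_of_mul_eq_one hmul

namespace Matrix

variable {ι n K : Type*}

theorem sum_vecMulVec_eq_transpose_mul [Fintype ι] [NonUnitalNonAssocSemiring K]
    (u v : ι → n → K) :
    ∑ i, vecMulVec (u i) (v i) = (of u)ᵀ * of v := by
  ext j k
  simp [sum_apply, vecMulVec_apply, mul_apply]

theorem mulVec_eq_of_mul_eq_one [Fintype ι] [Fintype n] [DecidableEq n] [Semiring K]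
    {P : Matrix n ι K} {L W : Matrix ι n K} (hPL : P * L = 1) {x y : n → K} {b : ι → K}
    (h : L *ᵥ x = W *ᵥ y + b) : x = (P * W) *ᵥ y + P *ᵥ b := by
  rw [← mulVec_mulVec, ← mulVec_add, ← h, mulVec_mulVec, hPL, one_mulVec]

theorem sub_dotProduct_eq_of_forall_add_eq {X : Type*} [Fintype n] [CommRing K]
    {a b : ι → n → K} {β : ι → K} {γ : X → K} {u v : X → n → K}
    (h : ∀ i x, a i ⬝ᵥ u x + β i + γ x = b i ⬝ᵥ v x) (i j : ι) (x : X) :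
    (a i - a j) ⬝ᵥ u x = (b i - b j) ⬝ᵥ v x + (β j - β i) := by
  rw [sub_dotProduct, sub_dotProduct, ← h i x, ← h j x]
  ring

theorem exists_affine_of_dotProduct_eq {X : Type*} [Fintype ι] [Fintype n] [DecidableEq n]
    [CommRing K]
    {a b : ι → n → K} {β : ι → K} {u v : X → n → K}
    (ha : IsUnit (∑ i, vecMulVec (a i) (a i)).det)
    (hba : IsUnit (∑ i, vecMulVec (b i) (a i)).det)
    (h : ∀ i x, a i ⬝ᵥ u x = b i ⬝ᵥ v x + β i) :
    ∃ A : Matrix n n K, IsUnit A.det ∧ ∃ α : n → K, ∀ x, u x = A *ᵥ v x + α := by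
  rw [sum_vecMulVec_eq_transpose_mul] at ha hba
  set L := of a
  set W := of b
  have hPL : ((Lᵀ * L)⁻¹ * Lᵀ) * L = 1 := by rw [Matrix.mul_assoc, nonsing_inv_mul _ ha]
  refine ⟨(Lᵀ * L)⁻¹ * Lᵀ * W, ?_, ((Lᵀ * L)⁻¹ * Lᵀ) *ᵥ β, fun x => ?_⟩
  · rw [Matrix.mul_assoc, det_mul, ← det_transpose (Lᵀ * W), transpose_mul, transpose_transpose]
    exact (isUnit_nonsing_inv_det _ ha).mul hba
  · exact mulVec_eq_of_mul_eq_one hPL (funext fun i => h i x)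

end Matrix

theorem identifiability_no_outliers_general (d m : ℕ)
    (f g : (Fin d → ℝ) → (Fin d → ℝ))
    (hf : ContDiff ℝ 1 f) (hg : ContDiff ℝ 1 g)
    (hgf : Function.LeftInverse g f) (hfg : Function.RightInverse g f)
    (lam : Fin (m + 1) → Fin d → ℝ) (lam0 : Fin (m + 1) → ℝ) (logZ : Fin (m + 1) → ℝ)
    (q : Fin d → ℝ → ℝ)
    (pstar : Fin (m + 1) → (Fin d → ℝ) → ℝ)
    (hpos : ∀ i s, 0 < pstar i s)
    (hexp : ∀ i s, Real.log (pstar i s)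
      = (∑ j, lam i j * q j (s j)) + lam0 i - logZ i)
    -- density of x given uᵢ, by the change of variables x = f(s), g = f⁻¹
    (pstarX : Fin (m + 1) → (Fin d → ℝ) → ℝ)
    (hpstarX : ∀ i x, pstarX i x = pstar i (g x) * |(fderiv ℝ g x).det|)
    -- universal approximation assumption
    (w : Fin (m + 1) → Fin d → ℝ) (h : (Fin d → ℝ) → (Fin d → ℝ))
    (c : (Fin d → ℝ) → ℝ) (e : Fin (m + 1) → ℝ)
    (hc : ∀ x, 0 < c x) (he : ∀ i, 0 < e i)
    (huniv : ∀ i x, Real.log (pstarX i x / (c x * e i)) = ∑ j, w i j * h x j)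
    -- invertibility of the two d × d matrices
    (barlam barw : Fin (m + 1) → Fin d → ℝ)
    (hbarlam : ∀ i, barlam i = lam i - lam 0)
    (hbarw : ∀ i, barw i = w i - w 0)
    (hΛ : IsUnit (∑ i : Fin m, Matrix.vecMulVec (barlam i.succ) (barlam i.succ)).det)
    (hW : IsUnit (∑ i : Fin m, Matrix.vecMulVec (barw i.succ) (barlam i.succ)).det) :
    ∃ A : Matrix (Fin d) (Fin d) ℝ, IsUnit A.det ∧ ∃ α : Fin d → ℝ,
      ∀ s : Fin d → ℝ, (fun j => q j (s j)) = A.mulVec (h (f s)) + α := by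
  have hdet : ∀ x, (fderiv ℝ g x).det ≠ 0 := fun x =>
    det_fderiv_ne_zero_of_rightInverse (hf.differentiable one_ne_zero _)
      (hg.differentiable one_ne_zero _) hfg
  have hlog : ∀ i s, lam i ⬝ᵥ (fun j => q j (s j)) + (lam0 i - logZ i - Real.log (e i))
      + (Real.log |(fderiv ℝ g (f s)).det| - Real.log (c (f s))) = w i ⬝ᵥ h (f s) := by
    intro i s
    have hJ := abs_pos.2 (hdet (f s))
    rw [dotProduct, dotProduct, ← huniv, hpstarX, hgf s,
      Real.log_div (mul_pos (hpos i s) hJ).ne' (mul_pos (hc _) (he i)).ne',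
      Real.log_mul (hpos i s).ne' hJ.ne', Real.log_mul (hc _).ne' (he i).ne', hexp]
    ring
  exact exists_affine_of_dotProduct_eq hΛ hW fun i s => by
    rw [hbarlam, hbarw]
    exact sub_dotProduct_eq_of_forall_add_eq hlog i.succ 0 s

/-- no-outlier special case of Theorem 1: for data `x = f(s)` with a
conditionally independent exponential-family source density
`log p*(s|uᵢ) = Σ_j λ_j(uᵢ) q_j(s_j) + λ₀(uᵢ) − log Z(λ(uᵢ))`, if the universal
approximation assumption `log(p*(x|uᵢ)/(c(x)e(uᵢ))) = w(uᵢ)ᵀh(x)` holds and the matrices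
`Λ̄ = Σᵢ λ̄(uᵢ)λ̄(uᵢ)ᵀ` and `Σᵢ w̄(uᵢ)λ̄(uᵢ)ᵀ` are invertible, then `q(s) = A h(f(s)) + α`
for an invertible matrix `A` and a vector `α`. -/
theorem identifiability_no_outliers (d m : ℕ) (hd : 0 < d)
    (f g : (Fin d → ℝ) → (Fin d → ℝ))
    (hf : ContDiff ℝ 1 f) (hg : ContDiff ℝ 1 g)
    (hgf : Function.LeftInverse g f) (hfg : Function.RightInverse g f)
    (lam : Fin (m + 1) → Fin d → ℝ) (lam0 : Fin (m + 1) → ℝ) (logZ : Fin (m + 1) → ℝ)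
    (q : Fin d → ℝ → ℝ)
    (pstar : Fin (m + 1) → (Fin d → ℝ) → ℝ)
    (hpos : ∀ i s, 0 < pstar i s)
    (hexp : ∀ i s, Real.log (pstar i s)
      = (∑ j, lam i j * q j (s j)) + lam0 i - logZ i)
    -- density of x given uᵢ, by the change of variables x = f(s), g = f⁻¹
    (pstarX : Fin (m + 1) → (Fin d → ℝ) → ℝ)
    (hpstarX : ∀ i x, pstarX i x = pstar i (g x) * |(fderiv ℝ g x).det|)
    -- universal approximation assumption
    (w : Fin (m + 1) → Fin d → ℝ) (h : (Fin d → ℝ) → (Fin d → ℝ))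
    (c : (Fin d → ℝ) → ℝ) (e : Fin (m + 1) → ℝ)
    (hc : ∀ x, 0 < c x) (he : ∀ i, 0 < e i)
    (huniv : ∀ i x, Real.log (pstarX i x / (c x * e i)) = ∑ j, w i j * h x j)
    -- invertibility of the two d × d matrices
    (barlam barw : Fin (m + 1) → Fin d → ℝ)
    (hbarlam : ∀ i, barlam i = lam i - lam 0)
    (hbarw : ∀ i, barw i = w i - w 0)
    (hΛ : IsUnit (∑ i : Fin m, Matrix.vecMulVec (barlam i.succ) (barlam i.succ)).det)
    (hW : IsUnit (∑ i : Fin m, Matrix.vecMulVec (barw i.succ) (barlam i.succ)).det) :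
    ∃ A : Matrix (Fin d) (Fin d) ℝ, IsUnit A.det ∧ ∃ α : Fin d → ℝ,
      ∀ s : Fin d → ℝ, (fun j => q j (s j)) = A.mulVec (h (f s)) + α :=
  identifiability_no_outliers_general d m f g hf hg hgf hfg lam lam0 logZ q pstar hpos hexp pstarX
    hpstarX w h c e hc he huniv barlam barw hbarlam hbarw hΛ hW
end

section
/- Let γ > 0 and define G_γ(t) := (t^{γ+1}/(1+t^{γ+1}))^{γ/(γ+1)} for t > 0, with G_γ(0) := 0. Let f : ℝ^d → ℝ^d be a C¹ diffeomorphism, let p*(s|u) and δ(s|u) be nonnegative conditional densities on ℝ^d (for u ranging over a measurable auxiliary space with probability density p(u)), let ε(u) ∈ [0,1), and suppose the supports are disjoint for every u: {s : p*(s|u) > 0} ∩ {s : δ(s|u) > 0} = ∅. Let p(s) be a marginal density with p(s) > 0 for all s. Transport all densities to x-space by the change of variables x = f(s) (so that p*(x|u), δ(x|u), p(x) are the corresponding densities of x), set δ(x,u) := δ(x|u)p(u), and define r*(x,u) := (1−ε(u))p*(x|u)/p(x) and ν(r) := ∬ G_γ(r(x,u)) ε(u) δ(x,u) dx du for nonnegative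 measurable r. Then: (i) ν(r*) = 0; and (ii) for every nonnegative measurable function r, ν(r) ≤ sup_{x,u} |G_γ(r(x,u)) − G_γ(r*(x,u))|. -/
/-! On the support of `δ(·|u)` the disjointness hypothesis forces `p* = 0`, hence `r* = 0` and
`G_γ(r*) = 0`: the integrand of `ν(r*)` vanishes identically. For a general `r`, on that support
`G_γ(r) = |G_γ(r) - G_γ(r*)|`, so `ν(r)` is at most the supremum times the total mass of the
weight `ε(u) δ(x|u) p(u)`, which is at most `1` by the change of variables `s = g(x)` and
Tonelli. -/

open MeasureTheory

/-- `G_γ(t) = (t^{γ+1}/(1+t^{γ+1}))^{γ/(γ+1)}` (for `t = 0` this is `0` since `γ > 0`). -/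
noncomputable def Ggam (γ t : ℝ) : ℝ := (t ^ (γ + 1) / (1 + t ^ (γ + 1))) ^ (γ / (γ + 1))

open scoped ENNReal

section Ggam

variable {γ t : ℝ}

theorem Ggam_zero (hγ : 0 < γ) : Ggam γ 0 = 0 := by
  have hγ1 : 0 < γ + 1 := by linarith
  rw [Ggam, Real.zero_rpow hγ1.ne', zero_div, Real.zero_rpow (div_pos hγ hγ1).ne']

theorem Ggam_nonneg (ht : 0 ≤ t) : 0 ≤ Ggam γ t := by
  have := Real.rpow_nonneg ht (γ + 1)
  unfold Ggam
  positivity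

theorem Ggam_le_one (hγ : 0 ≤ γ) (ht : 0 ≤ t) : Ggam γ t ≤ 1 := by
  have hpow := Real.rpow_nonneg ht (γ + 1)
  have hbase : t ^ (γ + 1) / (1 + t ^ (γ + 1)) ≤ 1 := by
    rw [div_le_one (by linarith)]
    linarith
  exact Real.rpow_le_one (by positivity) hbase (by positivity)

theorem abs_Ggam_sub_Ggam_le_one (hγ : 0 ≤ γ) {s : ℝ} (ht : 0 ≤ t) (hs : 0 ≤ s) :
    |Ggam γ t - Ggam γ s| ≤ 1 :=
  abs_sub_le_of_nonneg_of_le (Ggam_nonneg ht) (Ggam_le_one hγ ht)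
    (Ggam_nonneg hs) (Ggam_le_one hγ hs)

end Ggam

section Integral

variable {α : Type*} [MeasurableSpace α] {μ : Measure α}

theorem lintegral_ofReal_eq_one_of_integral_eq_one {δ : α → ℝ} (hδ : ∀ s, 0 ≤ δ s)
    (hδ1 : ∫ s, δ s ∂μ = 1) :
    ∫⁻ s, ENNReal.ofReal (δ s) ∂μ = 1 := by
  rw [← ofReal_integral_eq_lintegral_ofReal (integrable_of_integral_eq_one hδ1)
    (Filter.Eventually.of_forall hδ), hδ1, ENNReal.ofReal_one]

theorem norm_integral_le_of_norm_le_mul {f w : α → ℝ} {M : ℝ} (hM : 0 ≤ M)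
    (hw : ∫⁻ z, ENNReal.ofReal (w z) ∂μ ≤ 1)
    (hf : ∀ᵐ z ∂μ, ‖f z‖ ≤ M * w z) : ‖∫ z, f z ∂μ‖ ≤ M := by
  refine (norm_integral_le_lintegral_norm f).trans (ENNReal.toReal_le_of_le_ofReal hM ?_)
  calc ∫⁻ z, ENNReal.ofReal ‖f z‖ ∂μ
      ≤ ∫⁻ z, ENNReal.ofReal M * ENNReal.ofReal (w z) ∂μ := by
        refine lintegral_mono_ae (hf.mono fun z hz => ?_)
        rw [← ENNReal.ofReal_mul hM]
        exact ENNReal.ofReal_le_ofReal hz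
    _ = ENNReal.ofReal M * ∫⁻ z, ENNReal.ofReal (w z) ∂μ :=
        lintegral_const_mul' _ _ ENNReal.ofReal_ne_top
    _ ≤ ENNReal.ofReal M := mul_le_of_le_one_right' hw

theorem integral_mul_le_iSup_abs_sub {f g w : α → ℝ} (hf : ∀ z, 0 ≤ f z)
    (hbdd : BddAbove (Set.range fun z => |f z - g z|))
    (hw0 : ∀ z, 0 ≤ w z) (hw : ∫⁻ z, ENNReal.ofReal (w z) ∂μ ≤ 1)
    (hg : ∀ z, w z ≠ 0 → g z = 0) :
    ∫ z, f z * w z ∂μ ≤ ⨆ z, |f z - g z| := by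
  refine (Real.le_norm_self _).trans (norm_integral_le_of_norm_le_mul
    (Real.iSup_nonneg fun _ => abs_nonneg _) hw (Filter.Eventually.of_forall fun z => ?_))
  rw [Real.norm_eq_abs, abs_of_nonneg (mul_nonneg (hf z) (hw0 z))]
  by_cases hz : w z = 0
  · simp [hz]
  refine mul_le_mul_of_nonneg_right ?_ (hw0 z)
  calc f z = |f z - g z| := by rw [hg z hz, sub_zero, abs_of_nonneg (hf z)]
    _ ≤ _ := le_ciSup hbdd z

end Integral

section Product

variable {α β : Type*} [MeasurableSpace α] [MeasurableSpace β]
  {μ : Measure α} {ν : Measure β} [SFinite μ] [SFinite ν]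

theorem lintegral_prod_mul_le_one_of_le_one {k : α → β → ℝ≥0∞} {p : β → ℝ≥0∞}
    (hp_ne_top : ∀ b, p b ≠ ∞)
    (hk : ∀ b, ∫⁻ a, k a b ∂μ ≤ 1) (hp : ∫⁻ b, p b ∂ν ≤ 1) :
    ∫⁻ z, k z.1 z.2 * p z.2 ∂μ.prod ν ≤ 1 := by
  rw [← lintegral_prod_swap]
  calc ∫⁻ z, k z.2 z.1 * p z.1 ∂ν.prod μ
      ≤ ∫⁻ b, ∫⁻ a, k a b * p b ∂μ ∂ν := lintegral_prod_le _
    _ = ∫⁻ b, (∫⁻ a, k a b ∂μ) * p b ∂ν := by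
        simp_rw [lintegral_mul_const' _ _ (hp_ne_top _)]
    _ ≤ ∫⁻ b, p b ∂ν := lintegral_mono fun b => mul_le_of_le_one_left' (hk b)
    _ ≤ 1 := hp

theorem lintegral_prod_ofReal_mul_le_one {k : α → β → ℝ} {c p : β → ℝ}
    (hk0 : ∀ a b, 0 ≤ k a b) (hk : ∀ b, ∫⁻ a, ENNReal.ofReal (k a b) ∂μ ≤ 1)
    (hc : ∀ b, c b ≤ 1) (hp0 : ∀ b, 0 ≤ p b) (hp : ∫ b, p b ∂ν = 1) :
    ∫⁻ z, ENNReal.ofReal (c z.2 * (k z.1 z.2 * p z.2)) ∂μ.prod ν ≤ 1 := by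
  have hcp : ∫⁻ b, ENNReal.ofReal (c b * p b) ∂ν ≤ 1 :=
    calc ∫⁻ b, ENNReal.ofReal (c b * p b) ∂ν
        ≤ ∫⁻ b, ENNReal.ofReal (p b) ∂ν := lintegral_mono fun b =>
          ENNReal.ofReal_le_ofReal (mul_le_of_le_one_left (hp0 b) (hc b))
      _ = 1 := lintegral_ofReal_eq_one_of_integral_eq_one hp0 hp
  calc ∫⁻ z, ENNReal.ofReal (c z.2 * (k z.1 z.2 * p z.2)) ∂μ.prod ν
      = ∫⁻ z, ENNReal.ofReal (k z.1 z.2) * ENNReal.ofReal (c z.2 * p z.2) ∂μ.prod ν := by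
        refine lintegral_congr fun z => ?_
        rw [← ENNReal.ofReal_mul (hk0 _ _)]
        ring_nf
    _ ≤ 1 := lintegral_prod_mul_le_one_of_le_one (fun _ => ENNReal.ofReal_ne_top) hk hcp

end Product

section ChangeOfVariables

variable {E : Type*} [NormedAddCommGroup E] [NormedSpace ℝ E] [FiniteDimensional ℝ E]
  [MeasurableSpace E] [BorelSpace E] (μ : Measure E) [μ.IsAddHaarMeasure]

theorem lintegral_abs_det_fderiv_mul_comp_le {g : E → E} (hg : Differentiable ℝ g)
    (hinj : Function.Injective g) (F : E → ℝ≥0∞) :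
    ∫⁻ x, ENNReal.ofReal |(fderiv ℝ g x).det| * F (g x) ∂μ ≤ ∫⁻ s, F s ∂μ := by
  have hcov := lintegral_image_eq_lintegral_abs_det_fderiv_mul μ MeasurableSet.univ
    (fun x _ => (hg x).hasFDerivAt.hasFDerivWithinAt) hinj.injOn F
  rw [Measure.restrict_univ] at hcov
  rw [← hcov]
  exact setLIntegral_le_lintegral _ _

theorem lintegral_ofReal_comp_mul_abs_det_fderiv_le_one {g : E → E} (hg : Differentiable ℝ g)
    (hinj : Function.Injective g) {δ : E → ℝ} (hδ : ∀ s, 0 ≤ δ s) (hδ1 : ∫ s, δ s ∂μ = 1) :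
    ∫⁻ x, ENNReal.ofReal (δ (g x) * |(fderiv ℝ g x).det|) ∂μ ≤ 1 := by
  calc ∫⁻ x, ENNReal.ofReal (δ (g x) * |(fderiv ℝ g x).det|) ∂μ
      = ∫⁻ x, ENNReal.ofReal |(fderiv ℝ g x).det| * ENNReal.ofReal (δ (g x)) ∂μ := by
        simp_rw [mul_comm (δ _), ENNReal.ofReal_mul (abs_nonneg _)]
    _ ≤ ∫⁻ s, ENNReal.ofReal (δ s) ∂μ := lintegral_abs_det_fderiv_mul_comp_le μ hg hinj _
    _ = 1 := lintegral_ofReal_eq_one_of_integral_eq_one hδ hδ1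

end ChangeOfVariables

theorem nu_vanishes_at_rstar_general (d du : ℕ) (γ : ℝ) (hγ : 0 < γ)
    (f g : (Fin d → ℝ) → (Fin d → ℝ))
    (hg : ContDiff ℝ 1 g)
    (hfg : Function.RightInverse g f)
    (pstarS deltaS : (Fin d → ℝ) → (Fin du → ℝ) → ℝ)
    (pU : (Fin du → ℝ) → ℝ) (ε : (Fin du → ℝ) → ℝ) (pS : (Fin d → ℝ) → ℝ)
    (hpstarS : ∀ s u, 0 ≤ pstarS s u) (hdeltaS : ∀ s u, 0 ≤ deltaS s u)
    (hpU : ∀ u, 0 ≤ pU u) (hpUdens : ∫ u : Fin du → ℝ, pU u = 1)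
    (hdeltadens : ∀ u, ∫ s : Fin d → ℝ, deltaS s u = 1)
    (hε : ∀ u, ε u ∈ Set.Ico (0 : ℝ) 1)
    (hpS : ∀ s, 0 < pS s)
    (hdisjoint : ∀ u, {s | 0 < pstarS s u} ∩ {s | 0 < deltaS s u} = ∅)
    -- densities transported to x-space by the change of variables x = f(s)
    (pstarX deltaX : (Fin d → ℝ) → (Fin du → ℝ) → ℝ) (pX : (Fin d → ℝ) → ℝ)
    (hpstarX : ∀ x u, pstarX x u = pstarS (g x) u * |(fderiv ℝ g x).det|)
    (hdeltaX : ∀ x u, deltaX x u = deltaS (g x) u * |(fderiv ℝ g x).det|)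
    (hpX : ∀ x, pX x = pS (g x) * |(fderiv ℝ g x).det|)
    (rstar : (Fin d → ℝ) → (Fin du → ℝ) → ℝ)
    (hrstar : ∀ x u, rstar x u = (1 - ε u) * pstarX x u / pX x) :
    ((∫ z : (Fin d → ℝ) × (Fin du → ℝ),
        Ggam γ (rstar z.1 z.2) * (ε z.2 * (deltaX z.1 z.2 * pU z.2))) = 0) ∧
    (∀ r : (Fin d → ℝ) → (Fin du → ℝ) → ℝ, (∀ x u, 0 ≤ r x u) →
      Measurable (Function.uncurry r) →
      (∫ z : (Fin d → ℝ) × (Fin du → ℝ),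
          Ggam γ (r z.1 z.2) * (ε z.2 * (deltaX z.1 z.2 * pU z.2)))
        ≤ ⨆ z : (Fin d → ℝ) × (Fin du → ℝ),
            |Ggam γ (r z.1 z.2) - Ggam γ (rstar z.1 z.2)|) := by
  have hdeltaX_nonneg x u : 0 ≤ deltaX x u :=
    hdeltaX x u ▸ mul_nonneg (hdeltaS _ _) (abs_nonneg _)
  have hrstar_nonneg x u : 0 ≤ rstar x u := by
    have hε1 : 0 ≤ 1 - ε u := by linarith [(hε u).2]
    rw [hrstar, hpstarX, hpX]
    exact div_nonneg (mul_nonneg hε1 (mul_nonneg (hpstarS _ _) (abs_nonneg _)))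
      (mul_nonneg (hpS _).le (abs_nonneg _))
  have hGrstar x u (hx : ε u * (deltaX x u * pU u) ≠ 0) : Ggam γ (rstar x u) = 0 := by
    have hδ : 0 < deltaS (g x) u :=
      (hdeltaS _ _).lt_of_ne fun h => hx (by rw [hdeltaX, ← h]; ring)
    have hp : pstarS (g x) u = 0 :=
      le_antisymm (not_lt.1 fun hp => (hdisjoint u).subset ⟨hp, hδ⟩) (hpstarS _ _)
    rw [hrstar, hpstarX, hp, zero_mul, mul_zero, zero_div, Ggam_zero hγ]
  have hmass : ∫⁻ z : (Fin d → ℝ) × (Fin du → ℝ),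
      ENNReal.ofReal (ε z.2 * (deltaX z.1 z.2 * pU z.2)) ≤ 1 := by
    rw [Measure.volume_eq_prod]
    refine lintegral_prod_ofReal_mul_le_one hdeltaX_nonneg (fun u => ?_) (fun u => (hε u).2.le)
      hpU hpUdens
    simp_rw [hdeltaX]
    exact lintegral_ofReal_comp_mul_abs_det_fderiv_le_one _ (hg.differentiable one_ne_zero)
      hfg.injective (hdeltaS · u) (hdeltadens u)
  refine ⟨integral_eq_zero_of_ae (Filter.Eventually.of_forall fun z => ?_), fun r hr _ => ?_⟩
  · by_cases hz : ε z.2 * (deltaX z.1 z.2 * pU z.2) = 0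
    · simp only [hz, mul_zero, Pi.zero_apply]
    · simp only [hGrstar _ _ hz, zero_mul, Pi.zero_apply]
  · refine integral_mul_le_iSup_abs_sub (fun z => Ggam_nonneg (hr _ _)) ⟨1, ?_⟩
      (fun z => mul_nonneg (hε z.2).1 (mul_nonneg (hdeltaX_nonneg _ _) (hpU _))) hmass
      (fun z hz => hGrstar _ _ hz)
    rintro _ ⟨z, rfl⟩
    exact abs_Ggam_sub_Ggam_le_one hγ.le (hr _ _) (hrstar_nonneg _ _)

/-- Proposition 1: if the supports of the target conditional source density
`p*(s|u)` and the outlier conditional density `δ(s|u)` are disjoint for every `u`, then the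
outlier term `ν` of the binary γ-cross entropy, transported to `x`-space by the diffeomorphism
`x = f(s)`, satisfies `ν(r*) = 0` at the ideal solution `r*(x,u) = (1−ε(u))p*(x|u)/p(x)`, and
`ν(r) ≤ sup_{x,u} |G_γ(r(x,u)) − G_γ(r*(x,u))|` for every nonnegative measurable `r`. -/
theorem nu_vanishes_at_rstar (d du : ℕ) (γ : ℝ) (hγ : 0 < γ)
    (f g : (Fin d → ℝ) → (Fin d → ℝ))
    (hf : ContDiff ℝ 1 f) (hg : ContDiff ℝ 1 g)
    (hgf : Function.LeftInverse g f) (hfg : Function.RightInverse g f)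
    (pstarS deltaS : (Fin d → ℝ) → (Fin du → ℝ) → ℝ)
    (pU : (Fin du → ℝ) → ℝ) (ε : (Fin du → ℝ) → ℝ) (pS : (Fin d → ℝ) → ℝ)
    (hpstarS : ∀ s u, 0 ≤ pstarS s u) (hdeltaS : ∀ s u, 0 ≤ deltaS s u)
    (hpstarSm : Measurable (Function.uncurry pstarS))
    (hdeltaSm : Measurable (Function.uncurry deltaS))
    (hpUm : Measurable pU) (hεm : Measurable ε) (hpSm : Measurable pS)
    (hpU : ∀ u, 0 ≤ pU u) (hpUdens : ∫ u : Fin du → ℝ, pU u = 1)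
    (hdeltadens : ∀ u, ∫ s : Fin d → ℝ, deltaS s u = 1)
    (hε : ∀ u, ε u ∈ Set.Ico (0 : ℝ) 1)
    (hpS : ∀ s, 0 < pS s)
    (hdisjoint : ∀ u, {s | 0 < pstarS s u} ∩ {s | 0 < deltaS s u} = ∅)
    -- densities transported to x-space by the change of variables x = f(s)
    (pstarX deltaX : (Fin d → ℝ) → (Fin du → ℝ) → ℝ) (pX : (Fin d → ℝ) → ℝ)
    (hpstarX : ∀ x u, pstarX x u = pstarS (g x) u * |(fderiv ℝ g x).det|)
    (hdeltaX : ∀ x u, deltaX x u = deltaS (g x) u * |(fderiv ℝ g x).det|)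
    (hpX : ∀ x, pX x = pS (g x) * |(fderiv ℝ g x).det|)
    (rstar : (Fin d → ℝ) → (Fin du → ℝ) → ℝ)
    (hrstar : ∀ x u, rstar x u = (1 - ε u) * pstarX x u / pX x) :
    ((∫ z : (Fin d → ℝ) × (Fin du → ℝ),
        Ggam γ (rstar z.1 z.2) * (ε z.2 * (deltaX z.1 z.2 * pU z.2))) = 0) ∧
    (∀ r : (Fin d → ℝ) → (Fin du → ℝ) → ℝ, (∀ x u, 0 ≤ r x u) →
      Measurable (Function.uncurry r) →
      (∫ z : (Fin d → ℝ) × (Fin du → ℝ),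
          Ggam γ (r z.1 z.2) * (ε z.2 * (deltaX z.1 z.2 * pU z.2)))
        ≤ ⨆ z : (Fin d → ℝ) × (Fin du → ℝ),
            |Ggam γ (r z.1 z.2) - Ggam γ (rstar z.1 z.2)|) :=
  nu_vanishes_at_rstar_general d du γ hγ f g hg hfg pstarS deltaS pU ε pS hpstarS hdeltaS hpU
    hpUdens hdeltadens hε hpS hdisjoint pstarX deltaX pX hpstarX hdeltaX hpX rstar hrstar
end

section
/- Let γ > 0 and let u range over the finite set {1,…,K}. Let p*(x|u) and δ(x|u) be nonnegative measurable conditional densities on ℝ^d, ε(u) ∈ [0,1), p(u) ≥ 0 with Σ_u p(u) = 1, and set p(x|u) := (1−ε(u))p*(x|u) + ε(u)δ(x|u), p(x) := Σ_u p(x|u)p(u), and p(u|x) := p(x|u)p(u)/p(x) (wherever p(x) > 0). For a positive measurable function r(u,x), assume all the integrals below are finite and define: d_γ^K(r) := −(1/γ) log ∫ [ Σ_{u=1}^K r(u,x)^γ p(u|x) / (Σ_{u'=1}^K r(u',x)^{γ+1})^{γ/(γ+1)} ] p(x) dx; D_γ(r) := −(1/γ) log Σ_{u=1}^K (1−ε(u))p(u)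 ∫ [ r(u,x)^γ p*(x|u) / (Σ_{u'} r(u',x)^{γ+1})^{γ/(γ+1)} ] dx; and ν̃(r) := ∫ [ Σ_{u=1}^K r(u,x)^γ ε(u)δ(x|u)p(u) / (Σ_{u'} r(u',x)^{γ+1})^{γ/(γ+1)} ] dx. Then exp(−γ·d_γ^K(r)) = exp(−γ·D_γ(r)) + ν̃(r). -/
/-!
Expanding `p(u|x) = p(x|u)p(u)/p(x)`, the factor `p(x)` cancels, so the integrand of `d_γ^K` is
`Σ_u r(u,x)^γ p(x|u)p(u)` over the normalizer; when `p(x) = 0` both sides vanish since every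
`p(x|u)p(u)` is nonnegative. Splitting `p(x|u)p(u)` into its clean part `(1−ε(u))p(u)p*(x|u)` and
its outlier part `ε(u)δ(x|u)p(u)` and integrating term by term gives
`exp(−γ d_γ^K) = exp(−γ D_γ) + ν̃`, because `exp(−γ · (−(1/γ) log c)) = c` for `c > 0`.
-/

open MeasureTheory

theorem Real.exp_neg_mul_neg_one_div_mul_log {γ c : ℝ} (hγ : γ ≠ 0) (hc : 0 < c) :
    Real.exp (-γ * (-(1 / γ) * Real.log c)) = c := by
  rw [show -γ * (-(1 / γ) * Real.log c) = Real.log c by field_simp, Real.exp_log hc]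

theorem Finset.sum_mul_div_sum_mul_sum_of_nonneg {ι : Type*} (s : Finset ι) (c a : ι → ℝ)
    (ha : ∀ i ∈ s, 0 ≤ a i) :
    (∑ i ∈ s, c i * (a i / ∑ j ∈ s, a j)) * ∑ j ∈ s, a j = ∑ i ∈ s, c i * a i := by
  simp_rw [← mul_div_assoc, ← Finset.sum_div]
  by_cases hzero : ∑ j ∈ s, a j = 0
  · have hall : ∀ i ∈ s, a i = 0 := (Finset.sum_eq_zero_iff_of_nonneg ha).1 hzero
    rw [hzero, div_zero, zero_mul, Finset.sum_eq_zero fun i hi => by rw [hall i hi, mul_zero]]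
  · exact div_mul_cancel₀ _ hzero

theorem MeasureTheory.integral_sum_const_mul_add {ι α : Type*} [MeasurableSpace α] {μ : Measure α}
    (s : Finset ι) (c : ι → ℝ) (f : ι → α → ℝ) (g : α → ℝ)
    (hf : ∀ i ∈ s, Integrable (f i) μ) (hg : Integrable g μ) :
    ∫ x, (∑ i ∈ s, c i * f i x) + g x ∂μ = ∑ i ∈ s, c i * ∫ x, f i x ∂μ + ∫ x, g x ∂μ := by
  have hsum : Integrable (fun x => ∑ i ∈ s, c i * f i x) μ :=
    integrable_finsetSum s fun i hi => (hf i hi).const_mul (c i)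
  rw [integral_add hsum hg, integral_finsetSum s fun i hi => (hf i hi).const_mul (c i)]
  simp_rw [integral_const_mul]

theorem multiclass_gamma_cross_entropy_decomposition_general (d K : ℕ)
    (γ : ℝ) (hγ : 0 < γ)
    (pstar δ : Fin K → (Fin d → ℝ) → ℝ)
    (hpstar : ∀ u x, 0 ≤ pstar u x) (hδ : ∀ u x, 0 ≤ δ u x)
    (ε : Fin K → ℝ) (hε : ∀ u, ε u ∈ Set.Ico (0 : ℝ) 1)
    (pU : Fin K → ℝ) (hpU : ∀ u, 0 ≤ pU u)
    (r : Fin K → (Fin d → ℝ) → ℝ) (hr : ∀ u x, 0 < r u x)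
    (p : Fin K → (Fin d → ℝ) → ℝ)
    (hp : ∀ u x, p u x = (1 - ε u) * pstar u x + ε u * δ u x)
    (pX : (Fin d → ℝ) → ℝ) (hpX : ∀ x, pX x = ∑ u, p u x * pU u)
    (pUgivenX : Fin K → (Fin d → ℝ) → ℝ)
    (hpUgivenX : ∀ u x, pUgivenX u x = p u x * pU u / pX x)
    (hiD : ∀ u : Fin K, Integrable (fun x : Fin d → ℝ =>
      r u x ^ γ * pstar u x / (∑ u', r u' x ^ (γ + 1)) ^ (γ / (γ + 1))))
    (hiν : Integrable (fun x : Fin d → ℝ =>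
      (∑ u, r u x ^ γ * (ε u * δ u x * pU u)) / (∑ u', r u' x ^ (γ + 1)) ^ (γ / (γ + 1))))
    (hpos : 0 < ∑ u, (1 - ε u) * pU u
      * ∫ x : Fin d → ℝ, r u x ^ γ * pstar u x / (∑ u', r u' x ^ (γ + 1)) ^ (γ / (γ + 1)))
    (dK D ν : ℝ)
    (hdK : dK = -(1 / γ) * Real.log (∫ x : Fin d → ℝ,
      (∑ u, r u x ^ γ * pUgivenX u x) / (∑ u', r u' x ^ (γ + 1)) ^ (γ / (γ + 1)) * pX x))
    (hD : D = -(1 / γ) * Real.log (∑ u, (1 - ε u) * pU u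
      * ∫ x : Fin d → ℝ, r u x ^ γ * pstar u x / (∑ u', r u' x ^ (γ + 1)) ^ (γ / (γ + 1))))
    (hν : ν = ∫ x : Fin d → ℝ,
      (∑ u, r u x ^ γ * (ε u * δ u x * pU u)) / (∑ u', r u' x ^ (γ + 1)) ^ (γ / (γ + 1))) :
    Real.exp (-γ * dK) = Real.exp (-γ * D) + ν := by
  set den : (Fin d → ℝ) → ℝ := fun x => (∑ u', r u' x ^ (γ + 1)) ^ (γ / (γ + 1))
  have hmass : ∀ u x, 0 ≤ p u x * pU u := fun u x => by
    have ⟨hε₀, hε₁⟩ := hε u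
    rw [hp]
    exact mul_nonneg (add_nonneg (mul_nonneg (sub_nonneg.2 hε₁.le) (hpstar u x))
      (mul_nonneg hε₀ (hδ u x))) (hpU u)
  have hpoint : ∀ x, (∑ u, r u x ^ γ * pUgivenX u x) / den x * pX x
      = (∑ u, (1 - ε u) * pU u * (r u x ^ γ * pstar u x / den x))
        + (∑ u, r u x ^ γ * (ε u * δ u x * pU u)) / den x := fun x => by
    simp_rw [hpUgivenX, hpX, div_mul_eq_mul_div,
      Finset.sum_mul_div_sum_mul_sum_of_nonneg _ _ _ fun u _ => hmass u x, hp,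
      mul_div_assoc', ← Finset.sum_div, ← add_div, ← Finset.sum_add_distrib]
    congr 1
    exact Finset.sum_congr rfl fun u _ => by ring
  have hν_nonneg : 0 ≤ ν := hν ▸ integral_nonneg fun x =>
    div_nonneg (Finset.sum_nonneg fun u _ => mul_nonneg (Real.rpow_nonneg (hr u x).le _)
      (mul_nonneg (mul_nonneg (hε u).1 (hδ u x)) (hpU u)))
      (Real.rpow_nonneg (Finset.sum_nonneg fun u _ => (Real.rpow_nonneg (hr u x).le _)) _)
  rw [hdK, hD, Real.exp_neg_mul_neg_one_div_mul_log hγ.ne' hpos, funext hpoint,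
    integral_sum_const_mul_add _ _ _ _ (fun u _ => hiD u) hiν, ← hν,
    Real.exp_neg_mul_neg_one_div_mul_log hγ.ne' (by positivity)]

/-- exact decomposition of the multiclass γ-cross entropy:
`exp(−γ·d_γ^K(r)) = exp(−γ·D_γ(r)) + ν̃(r)` under the contaminated conditional density
`p(x|u) = (1−ε(u))p*(x|u) + ε(u)δ(x|u)`. -/
theorem multiclass_gamma_cross_entropy_decomposition (d K : ℕ) (hK : 0 < K)
    (γ : ℝ) (hγ : 0 < γ)
    (pstar δ : Fin K → (Fin d → ℝ) → ℝ)
    (hpstar : ∀ u x, 0 ≤ pstar u x) (hδ : ∀ u x, 0 ≤ δ u x)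
    (ε : Fin K → ℝ) (hε : ∀ u, ε u ∈ Set.Ico (0 : ℝ) 1)
    (pU : Fin K → ℝ) (hpU : ∀ u, 0 ≤ pU u) (hpUsum : ∑ u, pU u = 1)
    (r : Fin K → (Fin d → ℝ) → ℝ) (hr : ∀ u x, 0 < r u x)
    (p : Fin K → (Fin d → ℝ) → ℝ)
    (hp : ∀ u x, p u x = (1 - ε u) * pstar u x + ε u * δ u x)
    (pX : (Fin d → ℝ) → ℝ) (hpX : ∀ x, pX x = ∑ u, p u x * pU u)
    (pUgivenX : Fin K → (Fin d → ℝ) → ℝ)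
    (hpUgivenX : ∀ u x, pUgivenX u x = p u x * pU u / pX x)
    (hiD : ∀ u : Fin K, Integrable (fun x : Fin d → ℝ =>
      r u x ^ γ * pstar u x / (∑ u', r u' x ^ (γ + 1)) ^ (γ / (γ + 1))))
    (hiν : Integrable (fun x : Fin d → ℝ =>
      (∑ u, r u x ^ γ * (ε u * δ u x * pU u)) / (∑ u', r u' x ^ (γ + 1)) ^ (γ / (γ + 1))))
    (hpos : 0 < ∑ u, (1 - ε u) * pU u
      * ∫ x : Fin d → ℝ, r u x ^ γ * pstar u x / (∑ u', r u' x ^ (γ + 1)) ^ (γ / (γ + 1)))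
    (dK D ν : ℝ)
    (hdK : dK = -(1 / γ) * Real.log (∫ x : Fin d → ℝ,
      (∑ u, r u x ^ γ * pUgivenX u x) / (∑ u', r u' x ^ (γ + 1)) ^ (γ / (γ + 1)) * pX x))
    (hD : D = -(1 / γ) * Real.log (∑ u, (1 - ε u) * pU u
      * ∫ x : Fin d → ℝ, r u x ^ γ * pstar u x / (∑ u', r u' x ^ (γ + 1)) ^ (γ / (γ + 1))))
    (hν : ν = ∫ x : Fin d → ℝ,
      (∑ u, r u x ^ γ * (ε u * δ u x * pU u)) / (∑ u', r u' x ^ (γ + 1)) ^ (γ / (γ + 1))) :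
    Real.exp (-γ * dK) = Real.exp (-γ * D) + ν :=
  multiclass_gamma_cross_entropy_decomposition_general d K γ hγ pstar δ hpstar hδ ε hε pU hpU r hr p
    hp pX hpX pUgivenX hpUgivenX hiD hiν hpos dK D ν hdK hD hν
end

section
/- Let γ > 0, K ≥ 1, let p*(x|u) for u ∈ {1,…,K} be measurable probability densities on ℝ^d with p*(x|u) > 0 for all x, let ε ∈ [0,1), and define for positive measurable r(u,x): D_γ(r) := −(1/γ) log [ ((1−ε)/K) Σ_{u=1}^K ∫ r(u,x)^γ p*(x|u) / (Σ_{u'=1}^K r(u',x)^{γ+1})^{γ/(γ+1)} dx ]. Then D_γ is minimized at r*(u,x) := p*(x|u); that is, D_γ(r*) ≤ D_γ(r) for every positive measurable r for which D_γ(r) is defined. The key pointwise fact is the Hölder inequality: for all a, t ∈ (0,∞)^K, Σ_u a_u t_u^γ ≤ (Σ_u a_u^{γ+1})^{1/(γ+1)} (Σ_u t_u^{γ+1})^{γ/(γ+1)}, with equality when t is proportional to a. -/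
/-!
Hölder's inequality with exponents `γ + 1` and `(γ + 1) / γ` bounds the integrand of `D_γ`
at each `x`: `Σ_u r(u,x)^γ p*(x|u) / (Σ_u r(u,x)^{γ+1})^{γ/(γ+1)} ≤ (Σ_u p*(x|u)^{γ+1})^{1/(γ+1)}`,
and the right side is the value of the left side at `r = p*`. Integrating, the argument of the
logarithm is largest at `r = p*`, and `-(1/γ) log` is decreasing.
-/

open MeasureTheory

/-- The multiclass functional
`D_γ(r) = −(1/γ) log[ ((1−ε)/K) Σ_u ∫ r(u,x)^γ p*(x|u) / (Σ_{u'} r(u',x)^{γ+1})^{γ/(γ+1)} dx ]`. -/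
noncomputable def Dgam (d K : ℕ) (γ ε : ℝ)
    (pstar r : Fin K → (Fin d → ℝ) → ℝ) : ℝ :=
  -(1 / γ) * Real.log (((1 - ε) / K)
    * ∑ u, ∫ x : Fin d → ℝ,
        r u x ^ γ * pstar u x / (∑ u', r u' x ^ (γ + 1)) ^ (γ / (γ + 1)))

open Finset

namespace Real

variable {ι : Type*} [Fintype ι] {γ : ℝ}

lemma holderConjugate_add_one_div_self (hγ : 0 < γ) : (γ + 1).HolderConjugate ((γ + 1) / γ) := by
  rw [holderConjugate_iff, inv_div]
  constructor
  · linarith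
  · field_simp
    ring

lemma one_div_add_one_add_div_add_one (hγ : γ + 1 ≠ 0) : 1 / (γ + 1) + γ / (γ + 1) = 1 := by
  field_simp
  ring

theorem sum_mul_rpow_le (hγ : 0 < γ) {a t : ι → ℝ} (ha : ∀ i, 0 ≤ a i) (ht : ∀ i, 0 ≤ t i) :
    ∑ i, a i * t i ^ γ
      ≤ (∑ i, a i ^ (γ + 1)) ^ (1 / (γ + 1)) * (∑ i, t i ^ (γ + 1)) ^ (γ / (γ + 1)) := by
  have h := inner_le_Lp_mul_Lq_of_nonneg univ (holderConjugate_add_one_div_self hγ)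
    (fun i _ => ha i) (fun i _ => rpow_nonneg (ht i) γ)
  have hpow : ∀ i, (t i ^ γ) ^ ((γ + 1) / γ) = t i ^ (γ + 1) := fun i => by
    rw [← rpow_mul (ht i), mul_div_cancel₀ _ hγ.ne']
  simpa only [hpow, one_div_div] using h

lemma sum_rpow_mul_self (hγ : γ + 1 ≠ 0) {a : ι → ℝ} (ha : ∀ i, 0 ≤ a i) :
    ∑ i, a i ^ γ * a i = ∑ i, a i ^ (γ + 1) :=
  sum_congr rfl fun i _ => by rw [rpow_add' (ha i) hγ, rpow_one]

theorem sum_mul_rpow_eq_of_eq_smul (hγ : γ + 1 ≠ 0) {a : ι → ℝ} (ha : ∀ i, 0 ≤ a i)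
    {c : ℝ} (hc : 0 ≤ c) :
    ∑ i, a i * (c • a) i ^ γ
      = (∑ i, a i ^ (γ + 1)) ^ (1 / (γ + 1)) * (∑ i, (c • a) i ^ (γ + 1)) ^ (γ / (γ + 1)) := by
  have hS : 0 ≤ ∑ i, a i ^ (γ + 1) := sum_nonneg fun i _ => rpow_nonneg (ha i) _
  have hlhs : ∑ i, a i * (c • a) i ^ γ = c ^ γ * ∑ i, a i ^ (γ + 1) := by
    simp only [Pi.smul_apply, smul_eq_mul, mul_rpow hc (ha _), ← sum_rpow_mul_self hγ ha,
      mul_sum]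
    exact sum_congr rfl fun i _ => by ring
  have hrhs : ∑ i, (c • a) i ^ (γ + 1) = c ^ (γ + 1) * ∑ i, a i ^ (γ + 1) := by
    simp only [Pi.smul_apply, smul_eq_mul, mul_rpow hc (ha _), mul_sum]
  rw [hlhs, hrhs, mul_rpow (rpow_nonneg hc _) hS, ← rpow_mul hc, mul_div_cancel₀ _ hγ,
    mul_left_comm, ← rpow_add' hS (by rw [one_div_add_one_add_div_add_one hγ]; norm_num),
    one_div_add_one_add_div_add_one hγ, rpow_one]

theorem sum_rpow_mul_div_le (hγ : 0 < γ) {a t : ι → ℝ} (ha : ∀ i, 0 ≤ a i) (ht : ∀ i, 0 ≤ t i) :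
    ∑ i, t i ^ γ * a i / (∑ j, t j ^ (γ + 1)) ^ (γ / (γ + 1))
      ≤ (∑ i, a i ^ (γ + 1)) ^ (1 / (γ + 1)) := by
  rw [← sum_div]
  refine div_le_of_le_mul₀ (rpow_nonneg (sum_nonneg fun i _ => rpow_nonneg (ht i) _) _)
    (rpow_nonneg (sum_nonneg fun i _ => rpow_nonneg (ha i) _) _) ?_
  simpa only [mul_comm] using sum_mul_rpow_le hγ ha ht

theorem sum_rpow_mul_self_div (hγ : 0 < γ) {a : ι → ℝ} (ha : ∀ i, 0 ≤ a i) :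
    ∑ i, a i ^ γ * a i / (∑ j, a j ^ (γ + 1)) ^ (γ / (γ + 1))
      = (∑ i, a i ^ (γ + 1)) ^ (1 / (γ + 1)) := by
  have hγ' : γ + 1 ≠ 0 := by positivity
  have hexp : 1 / (γ + 1) = 1 - γ / (γ + 1) := by
    rw [eq_sub_iff_add_eq, one_div_add_one_add_div_add_one hγ']
  rw [← sum_div, sum_rpow_mul_self hγ' ha, hexp,
    rpow_sub' (sum_nonneg fun i _ => rpow_nonneg (ha i) _) (by rw [← hexp]; positivity),
    rpow_one]

theorem sum_rpow_mul_div_le_self (hγ : 0 < γ) {a t : ι → ℝ} (ha : ∀ i, 0 ≤ a i)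
    (ht : ∀ i, 0 ≤ t i) :
    ∑ i, t i ^ γ * a i / (∑ j, t j ^ (γ + 1)) ^ (γ / (γ + 1))
      ≤ ∑ i, a i ^ γ * a i / (∑ j, a j ^ (γ + 1)) ^ (γ / (γ + 1)) :=
  (sum_rpow_mul_div_le hγ ha ht).trans_eq (sum_rpow_mul_self_div hγ ha).symm

end Real

theorem MeasureTheory.sum_integral_le_sum_integral {ι α : Type*} [Fintype ι] [MeasurableSpace α]
    {μ : Measure α} {f g : ι → α → ℝ} (hf : ∀ i, Integrable (f i) μ)
    (hg : ∀ i, Integrable (g i) μ) (hfg : ∀ x, ∑ i, f i x ≤ ∑ i, g i x) :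
    ∑ i, ∫ x, f i x ∂μ ≤ ∑ i, ∫ x, g i x ∂μ := by
  rw [← integral_finsetSum _ fun i _ => hf i, ← integral_finsetSum _ fun i _ => hg i]
  exact integral_mono (integrable_finsetSum _ fun i _ => hf i)
    (integrable_finsetSum _ fun i _ => hg i) fun x => by simpa only [Finset.sum_apply] using hfg x

theorem multiclass_D_minimized_at_pstar_general (d K : ℕ) (γ : ℝ) (hγ : 0 < γ)
    (pstar : Fin K → (Fin d → ℝ) → ℝ)
    (hpos : ∀ u x, 0 < pstar u x)
    (ε : ℝ) (hε : ε ∈ Set.Ico (0 : ℝ) 1)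
    (hstarint : ∀ u : Fin K, Integrable (fun x : Fin d → ℝ =>
      pstar u x ^ γ * pstar u x / (∑ u', pstar u' x ^ (γ + 1)) ^ (γ / (γ + 1)))) :
    (∀ r : Fin K → (Fin d → ℝ) → ℝ, (∀ u x, 0 < r u x) → (∀ u, Measurable (r u)) →
      (∀ u : Fin K, Integrable (fun x : Fin d → ℝ =>
        r u x ^ γ * pstar u x / (∑ u', r u' x ^ (γ + 1)) ^ (γ / (γ + 1)))) →
      (0 < ((1 - ε) / K)
        * ∑ u, ∫ x : Fin d → ℝ,
            r u x ^ γ * pstar u x / (∑ u', r u' x ^ (γ + 1)) ^ (γ / (γ + 1))) →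
      Dgam d K γ ε pstar pstar ≤ Dgam d K γ ε pstar r) ∧
    (∀ a t : Fin K → ℝ, (∀ u, 0 < a u) → (∀ u, 0 < t u) →
      (∑ u, a u * t u ^ γ
          ≤ (∑ u, a u ^ (γ + 1)) ^ (1 / (γ + 1)) * (∑ u, t u ^ (γ + 1)) ^ (γ / (γ + 1))) ∧
      (∀ c : ℝ, 0 < c → t = c • a →
        ∑ u, a u * t u ^ γ
          = (∑ u, a u ^ (γ + 1)) ^ (1 / (γ + 1)) * (∑ u, t u ^ (γ + 1)) ^ (γ / (γ + 1)))) := by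
  refine ⟨fun r hr _ hrint hrpos => ?_, fun a t ha ht => ⟨?_, ?_⟩⟩
  · have hint := sum_integral_le_sum_integral hrint hstarint fun x =>
      Real.sum_rpow_mul_div_le_self hγ (fun u => (hpos u x).le) fun u => (hr u x).le
    have hweight : 0 ≤ (1 - ε) / K := div_nonneg (sub_nonneg.2 hε.2.le) K.cast_nonneg
    rw [Dgam, Dgam, neg_mul, neg_mul, neg_le_neg_iff]
    gcongr
  · exact Real.sum_mul_rpow_le hγ (fun u => (ha u).le) fun u => (ht u).le
  · rintro c hc rfl
    exact Real.sum_mul_rpow_eq_of_eq_smul (by positivity) (fun u => (ha u).le) hc.le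

/-- the multiclass γ-cross entropy `D_γ` is minimized at `r*(u,x) = p*(x|u)`,
together with the key pointwise Hölder inequality
`Σ_u a_u t_u^γ ≤ (Σ_u a_u^{γ+1})^{1/(γ+1)} (Σ_u t_u^{γ+1})^{γ/(γ+1)}`,
with equality when `t` is proportional to `a`. -/
theorem multiclass_D_minimized_at_pstar (d K : ℕ) (hK : 1 ≤ K) (γ : ℝ) (hγ : 0 < γ)
    (pstar : Fin K → (Fin d → ℝ) → ℝ)
    (hpos : ∀ u x, 0 < pstar u x)
    (hmeas : ∀ u, Measurable (pstar u))
    (hdens : ∀ u, ∫ x : Fin d → ℝ, pstar u x = 1)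
    (ε : ℝ) (hε : ε ∈ Set.Ico (0 : ℝ) 1)
    (hstarint : ∀ u : Fin K, Integrable (fun x : Fin d → ℝ =>
      pstar u x ^ γ * pstar u x / (∑ u', pstar u' x ^ (γ + 1)) ^ (γ / (γ + 1))))
    (hstarpos : 0 < ((1 - ε) / K)
      * ∑ u, ∫ x : Fin d → ℝ,
          pstar u x ^ γ * pstar u x / (∑ u', pstar u' x ^ (γ + 1)) ^ (γ / (γ + 1))) :
    (∀ r : Fin K → (Fin d → ℝ) → ℝ, (∀ u x, 0 < r u x) → (∀ u, Measurable (r u)) →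
      (∀ u : Fin K, Integrable (fun x : Fin d → ℝ =>
        r u x ^ γ * pstar u x / (∑ u', r u' x ^ (γ + 1)) ^ (γ / (γ + 1)))) →
      (0 < ((1 - ε) / K)
        * ∑ u, ∫ x : Fin d → ℝ,
            r u x ^ γ * pstar u x / (∑ u', r u' x ^ (γ + 1)) ^ (γ / (γ + 1))) →
      Dgam d K γ ε pstar pstar ≤ Dgam d K γ ε pstar r) ∧
    (∀ a t : Fin K → ℝ, (∀ u, 0 < a u) → (∀ u, 0 < t u) →
      (∑ u, a u * t u ^ γ
          ≤ (∑ u, a u ^ (γ + 1)) ^ (1 / (γ + 1)) * (∑ u, t u ^ (γ + 1)) ^ (γ / (γ + 1))) ∧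
      (∀ c : ℝ, 0 < c → t = c • a →
        ∑ u, a u * t u ^ γ
          = (∑ u, a u ^ (γ + 1)) ^ (1 / (γ + 1)) * (∑ u, t u ^ (γ + 1)) ^ (γ / (γ + 1)))) :=
  multiclass_D_minimized_at_pstar_general d K γ hγ pstar hpos ε hε hstarint
end
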